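/- arXiv:2203.13174 — 4 statements merged into one kernel-verified Lean document; each statement's English description precedes it below -/
import Mathlib

section
/- Let m, n, r be natural numbers, M an m × n real matrix of rank at least r, u ∈ ℝ^m, and A a finite nonempty set of real numbers. Then the number of vectors a ∈ A^n with M aᵀ = uᵀ is at most |A|^{n - r}. -/
/-!
The solutions of `M a = u` form a coset of `ker M`, whose dimension is `n - rank M ≤ n - r`.
The coordinate functionals restricted to `ker M` separate its points, so some `dim (ker M)` of
them already do (a basis of the dual chosen among them). Two solutions agreeing on those
coordinates differ by a kernel vector vanishing there, hence coincide, so restriction to these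
coordinates embeds the solutions lying in `A ^ n` into a set of size `|A| ^ dim (ker M)`.
-/

open Finset Module

theorem Module.Dual.exists_separating_finset_card_le_finrank {F V ι : Type*} [Field F]
    [AddCommGroup V] [Module F V] [FiniteDimensional F V] (φ : ι → Dual F V)
    (hφ : ∀ x, (∀ i, φ i x = 0) → x = 0) :
    ∃ t : Finset ι, #t ≤ finrank F V ∧ ∀ x, (∀ i ∈ t, φ i x = 0) → x = 0 := by
  obtain ⟨b, -, -, hspan, hli⟩ :=
    exists_linearIndepOn_extension (linearIndepOn_empty F φ) (Set.empty_subset Set.univ)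
  have : Finite b := hli.finite
  have : Fintype b := .ofFinite b
  refine ⟨b.toFinset, ?_, fun x hx => hφ x fun i => ?_⟩
  · rw [Set.toFinset_card, ← Subspace.dual_finrank_eq]
    exact hli.fintype_card_le_finrank
  · have hle : Submodule.span F (φ '' b) ≤ LinearMap.ker (Dual.eval F V x) := by
      rw [Submodule.span_le]
      rintro _ ⟨j, hj, rfl⟩
      exact hx j (Set.mem_toFinset.mpr hj)
    exact hle (hspan ⟨i, trivial, rfl⟩)

theorem Submodule.exists_separating_coords_card_le_finrank {F ι : Type*} [Field F]
    (K : Submodule F (ι → F)) [FiniteDimensional F K] :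
    ∃ t : Finset ι, #t ≤ finrank F K ∧ ∀ x ∈ K, (∀ i ∈ t, x i = 0) → x = 0 := by
  obtain ⟨t, ht, hsep⟩ := Dual.exists_separating_finset_card_le_finrank
    (fun i => (LinearMap.proj i).comp K.subtype) fun x hx =>
      Subtype.ext (funext fun i => hx i)
  exact ⟨t, ht, fun x hxK hx => congrArg Subtype.val (hsep ⟨x, hxK⟩ hx)⟩

theorem card_le_pow_finrank_of_sub_mem {F ι : Type*} [Field F] [Fintype ι] [DecidableEq ι]
    (K : Submodule F (ι → F)) {A : Finset F} (hA : A.Nonempty) {s : Finset (ι → F)}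
    (hsA : s ⊆ Fintype.piFinset fun _ => A) (hsK : ∀ a ∈ s, ∀ b ∈ s, a - b ∈ K) :
    #s ≤ #A ^ finrank F K := by
  obtain ⟨t, ht, hsep⟩ := K.exists_separating_coords_card_le_finrank
  calc #s ≤ #(Fintype.piFinset fun _ : t => A) := by
        refine card_le_card_of_injOn (fun a => t.restrict a) (fun a ha => ?_)
          fun a ha b hb hab => ?_
        · simpa using fun i _ => Fintype.mem_piFinset.mp (hsA ha) i
        · refine sub_eq_zero.mp (hsep _ (hsK a ha b hb) fun i hi => sub_eq_zero.mpr ?_)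
          exact congrFun hab ⟨i, hi⟩
    _ = #A ^ #t := by simp
    _ ≤ #A ^ finrank F K := Nat.pow_le_pow_right hA.card_pos ht

theorem Matrix.rank_add_finrank_ker_mulVecLin {F m n : Type*} [Field F] [Fintype n]
    (M : Matrix m n F) :
    M.rank + finrank F (LinearMap.ker M.mulVecLin) = Fintype.card n := by
  simpa [Matrix.rank] using LinearMap.finrank_range_add_finrank_ker M.mulVecLin

/-- if `M` is an `m × n` real matrix of rank at least `r`, `u ∈ ℝ^m`,
and `A` is a finite nonempty set of reals, then the number of vectors `a ∈ A^n` with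
`M aᵀ = uᵀ` is at most `|A|^{n-r}`. -/
theorem stmt6 (m n r : ℕ) (M : Matrix (Fin m) (Fin n) ℝ) (hr : r ≤ M.rank)
    (u : Fin m → ℝ) (A : Finset ℝ) (hA : A.Nonempty) :
    (((Fintype.piFinset fun _ : Fin n => A).filter fun a => M.mulVec a = u).card : ℕ) ≤
      A.card ^ (n - r) := by
  have hker : finrank ℝ (LinearMap.ker M.mulVecLin) ≤ n - r := by
    have := M.rank_add_finrank_ker_mulVecLin
    rw [Fintype.card_fin] at this
    omega
  refine (card_le_pow_finrank_of_sub_mem _ hA (filter_subset _ _) fun a ha b hb => ?_).trans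
    (Nat.pow_le_pow_right hA.card_pos hker)
  rw [mem_filter] at ha hb
  simp [Matrix.mulVec_sub, ha.2, hb.2]
end

section
/- Let h ≥ 2 and let P, Q be disjoint finite sets of prime numbers. Let C ⊆ {pq : p ∈ P, q ∈ Q} be a set such that every integer has at most one representation as a product of h elements of C (counted up to ordering). Construct the bipartite graph G on P ∪ Q where p ∈ P is joined to q ∈ Q whenever pq ∈ C. Then G contains no cycle of length 2h. -/
/-!
Walk around a `2h`-cycle `v₀ v₁ … v_{2h} = v₀` whose vertices are primes. The `h` even edges
`v_{2i} v_{2i+1}` and the `h` odd edges `v_{2i+1} v_{2i+2}` both multiply to `v₀ ⋯ v_{2h-1}`,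
so the `B_h^×[1]` property makes the two multisets of edge labels equal. Then `v₀ v₁` is the label
`v_{2j+1} v_{2j+2}` of an odd edge, and unique factorisation of a product of two primes forces a
repeated vertex on the cycle.
-/

open Finset

/-- The paper's `B_h^×[1]` sets. -/
def IsMulBhSet {M : Type*} [CommMonoid M] (h : ℕ) (C : Set M) : Prop :=
  ∀ m₁ m₂ : Multiset M, Multiset.card m₁ = h → Multiset.card m₂ = h →
    (∀ x ∈ m₁, x ∈ C) → (∀ x ∈ m₂, x ∈ C) → m₁.prod = m₂.prod → m₁ = m₂

theorem Nat.Prime.mul_eq_mul_cases {p q a b : ℕ} (hp : p.Prime) (ha : a.Prime) (hb : b.Prime)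
    (h : p * q = a * b) : p = a ∧ q = b ∨ p = b ∧ q = a := by
  rcases hp.dvd_mul.mp (Dvd.intro q h) with hpa | hpb
  · obtain rfl := (Nat.prime_dvd_prime_iff_eq hp ha).mp hpa
    exact .inl ⟨rfl, Nat.eq_of_mul_eq_mul_left hp.pos h⟩
  · obtain rfl := (Nat.prime_dvd_prime_iff_eq hp hb).mp hpb
    exact .inr ⟨rfl, Nat.eq_of_mul_eq_mul_left hp.pos (h.trans (mul_comm a p))⟩

namespace Finset

variable {M : Type*} [CommMonoid M]

theorem prod_range_two_mul (f : ℕ → M) (n : ℕ) :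
    ∏ i ∈ range (2 * n), f i = ∏ i ∈ range n, f (2 * i) * f (2 * i + 1) := by
  induction n with
  | zero => simp
  | succ n ih => rw [Nat.mul_succ, prod_range_succ, prod_range_succ, ih, prod_range_succ, mul_assoc]

theorem prod_range_succ_eq_of_eq (f : ℕ → M) {n : ℕ} (hf : f n = f 0) :
    ∏ i ∈ range n, f (i + 1) = ∏ i ∈ range n, f i := by
  cases n with
  | zero => simp
  | succ n => rw [prod_range_succ (fun i ↦ f (i + 1)), hf, ← prod_range_succ']

theorem prod_range_even_pairs_eq_odd_pairs (f : ℕ → M) {n : ℕ} (hf : f (2 * n) = f 0) :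
    ∏ i ∈ range n, f (2 * i) * f (2 * i + 1) = ∏ i ∈ range n, f (2 * i + 1) * f (2 * i + 2) := by
  rw [← prod_range_two_mul, ← prod_range_succ_eq_of_eq f hf]
  exact prod_range_two_mul (fun i ↦ f (i + 1)) n

end Finset

theorem SimpleGraph.Walk.IsCycle.length_ne_two_mul_of_isMulBhSet {G : SimpleGraph ℕ}
    {C : Set ℕ} {h v : ℕ} (hadj : ∀ a b, G.Adj a b → a.Prime ∧ b.Prime ∧ a * b ∈ C)
    (hC : IsMulBhSet h C) {w : G.Walk v v} (hw : w.IsCycle) : w.length ≠ 2 * h := by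
  intro hlen
  have hh : 2 ≤ h := by have := hw.three_le_length; omega
  set f := w.getVert
  have hclosed : f (2 * h) = f 0 := by simp [f, ← hlen]
  have hedge : ∀ i < 2 * h, (f i).Prime ∧ (f (i + 1)).Prime ∧ f i * f (i + 1) ∈ C :=
    fun i hi ↦ hadj _ _ (w.adj_getVert_succ (by omega))
  have hsame : (range h).val.map (fun i ↦ f (2 * i) * f (2 * i + 1)) =
      (range h).val.map (fun i ↦ f (2 * i + 1) * f (2 * i + 2)) := by
    refine hC _ _ (by simp) (by simp) ?_ ?_ ?_
    · simpa using fun i hi ↦ (hedge (2 * i) (by omega)).2.2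
    · simpa using fun i hi ↦ (hedge (2 * i + 1) (by omega)).2.2
    · exact prod_range_even_pairs_eq_odd_pairs f hclosed
  obtain ⟨j, hj, hlabel⟩ : ∃ j < h, f (2 * j + 1) * f (2 * j + 2) = f 0 * f 1 := by
    have h01 : f (2 * 0) * f (2 * 0 + 1) ∈ (range h).val.map (fun i ↦ f (2 * i) * f (2 * i + 1)) :=
      Multiset.mem_map_of_mem _ (mem_range.mpr (by omega))
    rw [hsame] at h01
    simpa using h01
  have hinj : ∀ {i k}, 1 ≤ i → i ≤ 2 * h → 1 ≤ k → k ≤ 2 * h → f i = f k → i = k :=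
    fun hi hi' hk hk' hik ↦ hw.getVert_injOn ⟨hi, hlen ▸ hi'⟩ ⟨hk, hlen ▸ hk'⟩ hik
  rcases (hedge 0 (by omega)).1.mul_eq_mul_cases (hedge (2 * j) (by omega)).2.1
      (hedge (2 * j + 1) (by omega)).2.1 hlabel.symm with ⟨h0, -⟩ | ⟨h0, h1⟩
  -- `v₀ = v_{2h}` reappears either at the odd position `2j + 1` or, as then `j = 0`, at position `2`.
  · have := hinj (by omega) (by omega) (by omega) le_rfl (h0.symm.trans hclosed.symm)
    omega
  · obtain rfl : j = 0 := by have := hinj le_rfl (by omega) (by omega) (by omega) h1; omega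
    have := hinj (by omega) (by omega) (by omega) le_rfl (h0.symm.trans hclosed.symm)
    omega

theorem stmt12_general (h : ℕ) (P Q : Finset ℕ)
    (hP : ∀ p ∈ P, Nat.Prime p) (hQ : ∀ q ∈ Q, Nat.Prime q)
    (C : Finset ℕ)
    (hSidon : ∀ n : ℕ, ∀ m₁ m₂ : Multiset ℕ,
      Multiset.card m₁ = h → (∀ x ∈ m₁, x ∈ C) → m₁.prod = n →
      Multiset.card m₂ = h → (∀ x ∈ m₂, x ∈ C) → m₂.prod = n → m₁ = m₂)
    (G : SimpleGraph ℕ)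
    (hG : ∀ a b : ℕ, G.Adj a b ↔
      (a ∈ P ∧ b ∈ Q ∧ a * b ∈ C) ∨ (b ∈ P ∧ a ∈ Q ∧ b * a ∈ C)) :
    ¬ ∃ (v : ℕ) (w : G.Walk v v), w.IsCycle ∧ w.length = 2 * h := by
  rintro ⟨v, w, hw, hlen⟩
  refine hw.length_ne_two_mul_of_isMulBhSet (C := C) ?_ ?_ hlen
  · intro a b hab
    rcases (hG a b).mp hab with ⟨ha, hb, habC⟩ | ⟨hb, ha, hbaC⟩
    · exact ⟨hP a ha, hQ b hb, habC⟩
    · exact ⟨hQ a ha, hP b hb, mul_comm b a ▸ hbaC⟩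
  · intro m₁ m₂ h₁ h₂ hm₁ hm₂ hprod
    exact hSidon _ m₁ m₂ h₁ hm₁ rfl h₂ hm₂ hprod.symm

/-- let `P, Q` be disjoint finite sets of primes and
`C ⊆ {pq : p ∈ P, q ∈ Q}` a `B_h^×[1]` set (every integer has at most one
representation, up to ordering, as a product of `h` elements of `C`). Then the
bipartite graph on `P ∪ Q`, joining `p ∈ P` to `q ∈ Q` whenever `pq ∈ C`,
contains no cycle of length `2h`. -/
theorem stmt12 (h : ℕ) (hh : 2 ≤ h) (P Q : Finset ℕ)
    (hP : ∀ p ∈ P, Nat.Prime p) (hQ : ∀ q ∈ Q, Nat.Prime q) (hPQ : Disjoint P Q)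
    (C : Finset ℕ) (hC : ∀ c ∈ C, ∃ p ∈ P, ∃ q ∈ Q, c = p * q)
    (hSidon : ∀ n : ℕ, ∀ m₁ m₂ : Multiset ℕ,
      Multiset.card m₁ = h → (∀ x ∈ m₁, x ∈ C) → m₁.prod = n →
      Multiset.card m₂ = h → (∀ x ∈ m₂, x ∈ C) → m₂.prod = n → m₁ = m₂)
    (G : SimpleGraph ℕ)
    (hG : ∀ a b : ℕ, G.Adj a b ↔
      (a ∈ P ∧ b ∈ Q ∧ a * b ∈ C) ∨ (b ∈ P ∧ a ∈ Q ∧ b * a ∈ C)) :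
    ¬ ∃ (v : ℕ) (w : G.Walk v v), w.IsCycle ∧ w.length = 2 * h :=
  stmt12_general h P Q hP hQ C hSidon G hG
end

section
/- For every natural number M ≥ 2N with N ≥ 1, there exist finite sets X, Y ⊂ ℚ with |Y| = N, |X| ≥ M, |X| ≥ |Y|, such that the number of quadruples (x_1, x_2, y_1, y_2) ∈ X × X × Y × Y with (x_1 - y_1)(x_2 - y_2) = 1 is at least c · |X| · |Y| for an absolute constant c > 0. -/
open Finset
open scoped Pointwise

/-- The quantity `H(X, Y)` of the paper. -/
def unitProductCount {K : Type*} [Field K] [DecidableEq K] (X Y : Finset K) : ℕ :=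
  (((X ×ˢ X) ×ˢ (Y ×ˢ Y)).filter fun p => (p.1.1 - p.2.1) * (p.1.2 - p.2.2) = 1).card

/-- Every `l ∈ L` yields the `|Y|²` solutions `x₁ = y₁ + l`, `x₂ = y₂ + l⁻¹`, and `l` is
recovered from a solution as `x₁ - y₁`. -/
theorem card_mul_card_sq_le_unitProductCount {K : Type*} [Field K] [DecidableEq K]
    {X Y L : Finset K} (hL : ∀ l ∈ L, l ≠ 0) (hshift : ∀ l ∈ L, ∀ y ∈ Y, y + l ∈ X)
    (hshift_inv : ∀ l ∈ L, ∀ y ∈ Y, y + l⁻¹ ∈ X) :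
    L.card * Y.card ^ 2 ≤ unitProductCount X Y := by
  rw [sq, ← card_product, ← card_product]
  refine card_le_card_of_injOn (fun t => ((t.2.1 + t.1, t.2.2 + t.1⁻¹), (t.2.1, t.2.2)))
    ?_ ?_
  · rintro ⟨l, y₁, y₂⟩ ht
    simp only [coe_product, Set.mem_prod, mem_coe] at ht
    obtain ⟨hl, hy₁, hy₂⟩ := ht
    simp only [coe_filter, Set.mem_ofPred_eq, mem_product, add_sub_cancel_left]
    exact ⟨⟨⟨hshift l hl y₁ hy₁, hshift_inv l hl y₂ hy₂⟩, hy₁, hy₂⟩,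
      mul_inv_cancel₀ (hL l hl)⟩
  · rintro ⟨l, y₁, y₂⟩ - ⟨l', y₁', y₂'⟩ - h
    simp only [Prod.mk.injEq] at h
    obtain ⟨⟨hx₁, -⟩, rfl, rfl⟩ := h
    rw [add_left_cancel hx₁]

def natSegment (n : ℕ) : Finset ℚ := (Icc 1 n).image (↑)

theorem card_natSegment (n : ℕ) : (natSegment n).card = n := by
  rw [natSegment, card_image_of_injective _ Nat.cast_injective, Nat.card_Icc,
    Nat.add_sub_cancel]

theorem natCast_mem_natSegment {k n : ℕ} (hk : 1 ≤ k) (hkn : k ≤ n) :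
    (k : ℚ) ∈ natSegment n :=
  mem_image_of_mem _ (mem_Icc.2 ⟨hk, hkn⟩)

theorem mem_natSegment {x : ℚ} {n : ℕ} :
    x ∈ natSegment n ↔ ∃ k : ℕ, 1 ≤ k ∧ k ≤ n ∧ (k : ℚ) = x := by
  simp [natSegment, and_assoc]

/-- The paper's construction `Y = [1, N]`, `X = [1, M] ∪ (Y + {1, 1/2, …, 1/M})`: every
`l ∈ [1, M - N]` is a difference `z - y` and its inverse a difference `(y + 1/l) - y`. -/
theorem exists_card_le_and_unitProductCount_ge (N M : ℕ) (hNM : N ≤ M) :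
    ∃ X Y : Finset ℚ, Y.card = N ∧ M ≤ X.card ∧ X.card ≤ M * (N + 1) ∧
      (M - N) * N ^ 2 ≤ unitProductCount X Y := by
  set Y := natSegment N
  set X : Finset ℚ := natSegment M ∪ (Y + (natSegment M)⁻¹)
  have hYcard : Y.card = N := card_natSegment N
  refine ⟨X, Y, hYcard, ?_, ?_, ?_⟩
  · exact (card_natSegment M).symm.trans_le (card_le_card subset_union_left)
  · calc X.card ≤ (natSegment M).card + Y.card * (natSegment M)⁻¹.card :=
          (card_union_le _ _).trans (Nat.add_le_add_left card_add_le _)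
      _ = M * (N + 1) := by rw [card_inv, hYcard, card_natSegment]; ring
  · rw [← card_natSegment (M - N), ← hYcard]
    apply card_mul_card_sq_le_unitProductCount
    · intro l hl
      obtain ⟨k, hk, -, rfl⟩ := mem_natSegment.1 hl
      exact Nat.cast_ne_zero.2 (by omega)
    · intro l hl y hy
      obtain ⟨k, hk, hkM, rfl⟩ := mem_natSegment.1 hl
      obtain ⟨j, hj, hjN, rfl⟩ := mem_natSegment.1 hy
      exact mem_union_left _ (by exact_mod_cast natCast_mem_natSegment (by omega) (by omega))
    · intro l hl y hy
      obtain ⟨k, hk, hkM, rfl⟩ := mem_natSegment.1 hl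
      refine mem_union_right _ (add_mem_add hy (inv_mem_inv ?_))
      exact natCast_mem_natSegment hk (by omega)

/-- there is an absolute constant `c > 0` such that for all `N ≥ 1` and
`M ≥ 2N` there exist finite `X, Y ⊆ ℚ` with `|Y| = N`, `|X| ≥ M`, `|X| ≥ |Y|`, and the
number of quadruples `(x₁,x₂,y₁,y₂) ∈ X²×Y²` with `(x₁-y₁)(x₂-y₂) = 1` is at least
`c·|X|·|Y|`. -/
theorem stmt13 : ∃ c : ℝ, 0 < c ∧ ∀ N M : ℕ, 1 ≤ N → 2 * N ≤ M →
    ∃ X Y : Finset ℚ, Y.card = N ∧ M ≤ X.card ∧ Y.card ≤ X.card ∧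
      c * X.card * Y.card ≤
        ((((X ×ˢ X) ×ˢ (Y ×ˢ Y)).filter
          fun p => (p.1.1 - p.2.1) * (p.1.2 - p.2.2) = 1).card : ℝ) := by
  refine ⟨1 / 4, by norm_num, fun N M hN hM => ?_⟩
  obtain ⟨X, Y, hY, hXM, hXle, hcount⟩ := exists_card_le_and_unitProductCount_ge N M (by omega)
  refine ⟨X, Y, hY, hXM, by omega, ?_⟩
  -- `M (N + 1) N ≤ 2 M N² ≤ 4 (M - N) N²`, using `N ≥ 1` and `M - N ≥ M / 2`.
  have hcard_mul : X.card * N ≤ 4 * ((M - N) * N ^ 2) := by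
    obtain ⟨K, rfl⟩ : ∃ K, M = N + K := ⟨M - N, by omega⟩
    rw [Nat.add_sub_cancel_left]
    nlinarith [Nat.mul_le_mul_right N hXle]
  have : (X.card * N : ℝ) ≤ 4 * unitProductCount X Y := by
    exact_mod_cast hcard_mul.trans (Nat.mul_le_mul_left 4 hcount)
  rw [hY]
  unfold unitProductCount at this
  linarith
end

section
/- Let N be a natural number, g, h natural numbers with h ≥ 2, and let A_{N,N} = {(2i+1)·2^j : 1 ≤ i ≤ N, 1 ≤ j ≤ N}. Then any subset C ⊆ A_{N,N} such that every integer has at most g representations (up to ordering) as a product of h elements of C satisfies |C|^h ≤ g · h! · h · N^{h+1}. -/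
/-!
Count the `|C|^h` ordered `h`-tuples from `C` by their product: a product has at most `g`
unordered representations, each coming from at most `h!` tuples, so `|C|^h ≤ g·h!·|C^h|`.
Every element of `A_{N,N}^h` is an odd number from the `h`-fold product set of
`{3, 5, …, 2N+1}` (at most `N^h` values) times `2^j` with `h ≤ j ≤ hN`, so `|C^h| ≤ N^h·hN`.
-/

open Finset
open scoped Pointwise Nat

/-- Any type carries a linear order, so both tuples can be sorted; equal multisets have equal
sorted tuples. -/
theorem exists_perm_eq_comp_of_coe_ofFn_eq {α : Type*} {h : ℕ} {a b : Fin h → α}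
    (hab : (List.ofFn a : Multiset α) = List.ofFn b) : ∃ σ : Equiv.Perm (Fin h), a = b ∘ σ := by
  let _ : LinearOrder α := IsWellOrder.linearOrder WellOrderingRel
  have hsort : List.ofFn (a ∘ Tuple.sort a) = List.ofFn (b ∘ Tuple.sort b) :=
    List.Perm.eq_of_sortedLE (Tuple.monotone_sort a).sortedLE_ofFn
      (Tuple.monotone_sort b).sortedLE_ofFn
      (((Tuple.sort a).ofFn_comp_perm a).trans
        ((Multiset.coe_eq_coe.mp hab).trans ((Tuple.sort b).ofFn_comp_perm b).symm))
  refine ⟨(Tuple.sort a).symm.trans (Tuple.sort b), funext fun i => ?_⟩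
  simpa using congrFun (List.ofFn_injective hsort) ((Tuple.sort a).symm i)

theorem card_filter_coe_ofFn_eq_le_factorial {α : Type*} [DecidableEq α] {h : ℕ}
    (s : Finset (Fin h → α)) (m : Multiset α) :
    #{a ∈ s | (List.ofFn a : Multiset α) = m} ≤ h ! := by
  obtain hempty | ⟨a₀, ha₀⟩ := eq_empty_or_nonempty {a ∈ s | (List.ofFn a : Multiset α) = m}
  · simp [hempty]
  calc #{a ∈ s | (List.ofFn a : Multiset α) = m}
      ≤ #(univ.image fun σ : Equiv.Perm (Fin h) => a₀ ∘ ⇑σ) := by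
        refine card_le_card fun a ha => ?_
        obtain ⟨σ, hσ⟩ :=
          exists_perm_eq_comp_of_coe_ofFn_eq ((mem_filter.mp ha).2.trans (mem_filter.mp ha₀).2.symm)
        exact mem_image.mpr ⟨σ, mem_univ _, hσ.symm⟩
    _ ≤ h ! := card_image_le.trans (by simp [Fintype.card_perm])

theorem Multiset.finite_setOf_card_eq_of_mem {α : Type*} (C : Finset α) (h : ℕ) :
    {m : Multiset α | Multiset.card m = h ∧ ∀ x ∈ m, x ∈ C}.Finite := by
  classical
  refine ((C.sym h).finite_toSet.image ((↑) : Sym α h → Multiset α)).subset ?_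
  rintro m ⟨hcard, hmem⟩
  exact ⟨⟨m, hcard⟩, mem_sym_iff.mpr hmem, rfl⟩

section BhSets

variable {M : Type*} [CommMonoid M] [DecidableEq M]

theorem prod_mem_pow {C : Finset M} {h : ℕ} {a : Fin h → M} (ha : ∀ i, a i ∈ C) :
    ∏ i, a i ∈ C ^ h :=
  mem_pow.mpr ⟨fun i => ⟨a i, ha i⟩, by simp [List.prod_ofFn]⟩

theorem card_pow_le_mul_card_pow_of_ncard_le {C : Finset M} {h g : ℕ}
    (hC : ∀ n : M,
      {m : Multiset M | Multiset.card m = h ∧ (∀ x ∈ m, x ∈ C) ∧ m.prod = n}.ncard ≤ g) :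
    #C ^ h ≤ g * h ! * #(C ^ h) := by
  set s := Fintype.piFinset fun _ : Fin h => C
  have hfiber : ∀ n : M, #{a ∈ s | ∏ i, a i = n} ≤ g * h ! := by
    intro n
    set F := {a ∈ s | ∏ i, a i = n}
    set reps := {m : Multiset M | Multiset.card m = h ∧ (∀ x ∈ m, x ∈ C) ∧ m.prod = n}
    have hreps : ↑(F.image fun a => (List.ofFn a : Multiset M)) ⊆ reps := by
      intro m hm
      obtain ⟨a, haF, rfl⟩ := mem_image.mp hm
      obtain ⟨has, hprod⟩ := mem_filter.mp haF
      refine ⟨by simp, fun x hx => ?_, by simpa [List.prod_ofFn] using hprod⟩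
      obtain ⟨i, rfl⟩ := List.mem_ofFn.mp (Multiset.mem_coe.mp hx)
      exact Fintype.mem_piFinset.mp has i
    have hreps_finite : reps.Finite :=
      (Multiset.finite_setOf_card_eq_of_mem C h).subset fun m hm => ⟨hm.1, hm.2.1⟩
    calc #F ≤ h ! * #(F.image fun a => (List.ofFn a : Multiset M)) :=
          card_le_mul_card_image F _ fun m _ => card_filter_coe_ofFn_eq_le_factorial F m
      _ ≤ h ! * g := by
          gcongr
          rw [← Set.ncard_coe_finset]
          exact (Set.ncard_le_ncard hreps hreps_finite).trans (hC n)
      _ = g * h ! := mul_comm _ _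
  calc #C ^ h = #s := (Fintype.card_piFinset_const C h).symm
    _ ≤ g * h ! * #(C ^ h) :=
      card_le_mul_card_image_of_maps_to
        (fun a ha => prod_mem_pow (Fintype.mem_piFinset.mp ha)) _ fun n _ => hfiber n

theorem pow_image_pow_Icc_subset (x : M) (a b : ℕ) :
    ∀ h : ℕ, ((Icc a b).image (x ^ ·)) ^ h ⊆ (Icc (h * a) (h * b)).image (x ^ ·)
  | 0 => by simp [← singleton_one]
  | h + 1 => by
    rw [pow_succ]
    intro y hy
    obtain ⟨_, hz, _, hw, rfl⟩ := mem_mul.mp hy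
    obtain ⟨i, hi, rfl⟩ := mem_image.mp (pow_image_pow_Icc_subset x a b h hz)
    obtain ⟨k, hk, rfl⟩ := mem_image.mp hw
    rw [mem_Icc] at hi hk
    exact mem_image.mpr ⟨i + k, mem_Icc.mpr ⟨by nlinarith, by nlinarith⟩, pow_add x i k⟩

end BhSets

/-- The set `A_{N,N}`. -/
def oddMulTwoPowGrid (N : ℕ) : Finset ℕ :=
  (Icc 1 N ×ˢ Icc 1 N).image fun p : ℕ × ℕ => (2 * p.1 + 1) * 2 ^ p.2

theorem oddMulTwoPowGrid_subset_mul (N : ℕ) :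
    oddMulTwoPowGrid N ⊆ (Icc 1 N).image (2 * · + 1) * (Icc 1 N).image (2 ^ ·) := by
  intro n hn
  obtain ⟨⟨i, j⟩, hij, rfl⟩ := mem_image.mp hn
  obtain ⟨hi, hj⟩ := mem_product.mp hij
  exact mem_mul.mpr ⟨_, mem_image_of_mem _ hi, _, mem_image_of_mem _ hj, rfl⟩

theorem card_oddMulTwoPowGrid_pow_le (N : ℕ) {h : ℕ} (hh : 1 ≤ h) :
    #(oddMulTwoPowGrid N ^ h) ≤ h * N ^ (h + 1) := by
  have hodd : #((Icc 1 N).image (2 * · + 1)) ≤ N := card_image_le.trans (by simp)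
  have htwo : #(((Icc 1 N).image (2 ^ ·)) ^ h) ≤ h * N := by
    refine (card_le_card (pow_image_pow_Icc_subset 2 1 N h)).trans (card_image_le.trans ?_)
    rw [Nat.card_Icc]
    omega
  calc #(oddMulTwoPowGrid N ^ h)
      ≤ #(((Icc 1 N).image (2 * · + 1)) ^ h * ((Icc 1 N).image (2 ^ ·)) ^ h) := by
        rw [← mul_pow]
        exact card_le_card (pow_subset_pow_left (oddMulTwoPowGrid_subset_mul N))
    _ ≤ N ^ h * (h * N) := card_mul_le.trans (by gcongr; exact card_pow_le.trans (by gcongr))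
    _ = h * N ^ (h + 1) := by ring

/-- for `A_{N,N} = {(2i+1)·2^j : 1 ≤ i,j ≤ N}`, any `B_h^×[g]` subset
`C ⊆ A_{N,N}` (every integer has at most `g` representations, up to ordering, as a
product of `h` elements of `C`) satisfies `|C|^h ≤ g·h!·h·N^{h+1}`. -/
theorem stmt15 (N g h : ℕ) (hh : 2 ≤ h)
    (C : Finset ℕ)
    (hC : C ⊆ (Finset.Icc 1 N ×ˢ Finset.Icc 1 N).image
      fun p : ℕ × ℕ => (2 * p.1 + 1) * 2 ^ p.2)
    (hSidon : ∀ n : ℕ,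
      ({m : Multiset ℕ | Multiset.card m = h ∧ (∀ x ∈ m, x ∈ C) ∧ m.prod = n}).ncard ≤ g) :
    C.card ^ h ≤ g * Nat.factorial h * h * N ^ (h + 1) := by
  have hprod : #(C ^ h) ≤ h * N ^ (h + 1) :=
    (card_le_card (pow_subset_pow_left (t := oddMulTwoPowGrid N) hC)).trans
      (card_oddMulTwoPowGrid_pow_le N (by omega))
  calc #C ^ h ≤ g * h ! * #(C ^ h) := card_pow_le_mul_card_pow_of_ncard_le hSidon
    _ ≤ g * h ! * (h * N ^ (h + 1)) := by gcongr
    _ = g * h ! * h * N ^ (h + 1) := by ring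
end
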